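/- arXiv:1711.02611 — 3 statements merged into one kernel-verified Lean document; each statement's English description precedes it below -/
import Mathlib

section
/- Let A ⊆ B be a unital inclusion of C*-algebras, Φ : B → A a completely positive map, H a right Hilbert A-module with a *-homomorphism π : B → B(H) and a vector ξ ∈ H such that Φ(b) = ⟨ξ, π(b)ξ⟩ for all b ∈ B. Then Φ is an A-valued conditional expectation (i.e., Φ|_A = id and Φ(a1 b a2) = a1 Φ(b) a2 for a1, a2 ∈ A) if and only if ⟨ξ,ξ⟩ = 1 and π(a)ξ = ξ·a for every a ∈ A. -/
/-- A linear-type map `Φ : B → A` between star rings is completely positive if for every `N`,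
`Φ` applied entrywise maps elements `p*p` of `M_N(B)` to positive elements of `M_N(A)`
(expressed in the C*-fashion as elements of the form `r*r`). -/
def IsCP {A B : Type*} [Ring A] [StarRing A] [Ring B] [StarRing B] (Φ : B → A) : Prop :=
  ∀ (N : ℕ) (p : Matrix (Fin N) (Fin N) B),
    ∃ r : Matrix (Fin N) (Fin N) A, (star p * p).map Φ = star r * r

/-- Characterization of conditional expectations: if `Φ(b) = ⟨ξ, π(b)ξ⟩` for a representation
`π` of `B` on a right Hilbert `A`-module `H` (inner product `ip`, right action `rs`), then `Φ`
is an `A`-valued conditional expectation (restricts to the identity on `A` and is an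
`A`-bimodule map) iff `⟨ξ,ξ⟩ = 1` and `π(a)ξ = ξ·a` for all `a ∈ A`. -/
theorem stmt6 {A B H : Type*} [CStarAlgebra A] [CStarAlgebra B] [AddCommGroup H]
    (ι : A →⋆ₐ[ℂ] B)
    (ip : H → H → A) (rs : H → A → H) (π : B → H → H)
    (h_add : ∀ x y z : H, ip x (y + z) = ip x y + ip x z)
    (h_smul : ∀ (x y : H) (a : A), ip x (rs y a) = ip x y * a)
    (h_star : ∀ x y : H, star (ip x y) = ip y x)
    (h_pos : ∀ x : H, ∃ a : A, ip x x = star a * a)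
    (h_def : ∀ x : H, ip x x = 0 → x = 0)
    (hπ_mul : ∀ (b₁ b₂ : B) (x : H), π (b₁ * b₂) x = π b₁ (π b₂ x))
    (hπ_one : ∀ x : H, π 1 x = x)
    (hπ_addx : ∀ (b : B) (x y : H), π b (x + y) = π b x + π b y)
    (h_adj : ∀ (b : B) (x y : H), ip (π b x) y = ip x (π (star b) y))
    (h_Alin : ∀ (b : B) (x : H) (a : A), π b (rs x a) = rs (π b x) a)
    (ξ : H)
    (hCP : IsCP (fun b : B => ip ξ (π b ξ))) :
    ((∀ a : A, ip ξ (π (ι a) ξ) = a) ∧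
        (∀ (a₁ a₂ : A) (b : B), ip ξ (π (ι a₁ * b * ι a₂) ξ) = a₁ * ip ξ (π b ξ) * a₂))
      ↔ (ip ξ ξ = 1 ∧ ∀ a : A, π (ι a) ξ = rs ξ a) := by
  -- basic facts about ip
  have h_zero : ∀ x : H, ip x 0 = 0 := by
    intro x
    have h := h_add x 0 0
    rw [add_zero] at h
    exact left_eq_add.mp h
  have h_neg : ∀ x y : H, ip x (-y) = -(ip x y) := by
    intro x y
    have h := h_add x y (-y)
    rw [add_neg_cancel, h_zero] at h
    exact eq_neg_of_add_eq_zero_left (by rw [add_comm]; exact h.symm)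
  have h_sub : ∀ x y z : H, ip x (y - z) = ip x y - ip x z := by
    intro x y z
    rw [sub_eq_add_neg, h_add, h_neg, sub_eq_add_neg]
  have h_adj' : ∀ (b : B) (x y : H), ip x (π b y) = ip (π (star b) x) y := by
    intro b x y
    rw [h_adj (star b) x y, star_star]
  constructor
  · rintro ⟨hid, hbi⟩
    have hone : ip ξ ξ = 1 := by
      have := hid 1
      rwa [map_one, hπ_one] at this
    refine ⟨hone, fun a => ?_⟩
    have key : ip (π (ι a) ξ - rs ξ a) (π (ι a) ξ - rs ξ a) = 0 := by
      have e1 : ip (π (ι a) ξ) (π (ι a) ξ) = star a * a := by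
        have h1 := hbi (star a) a 1
        rw [mul_one, hπ_one, hone, mul_one] at h1
        rw [h_adj, ← hπ_mul, ← map_star]
        exact h1
      have e2 : ip (π (ι a) ξ) (rs ξ a) = star a * a := by
        rw [h_smul, h_adj, ← map_star, hid (star a)]
      have e3 : ip (rs ξ a) (π (ι a) ξ) = star a * a := by
        rw [← h_star, e2, star_mul, star_star]
      have e4 : ip (rs ξ a) (rs ξ a) = star a * a := by
        rw [h_smul, ← h_star, h_smul, hone, one_mul]
      rw [h_sub, ← h_star (π (ι a) ξ), ← h_star (rs ξ a), h_sub, h_sub, e1, e2, e3, e4]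
      simp
    have := h_def _ key
    exact sub_eq_zero.mp this
  · rintro ⟨hone, hcov⟩
    have hcov' : ∀ (a : A) (x : H), ip ξ (π (ι a) x) = a * ip ξ x := by
      intro a x
      rw [h_adj', ← map_star, hcov (star a), ← h_star, h_smul, star_mul, h_star, star_star]
    constructor
    · intro a
      rw [hcov' a ξ, hone, mul_one]
    · intro a₁ a₂ b
      rw [hπ_mul, hπ_mul, hcov a₂, h_Alin, h_Alin, h_smul, hcov' a₁]
end

section
/- Let B₁, …, B_N be A-subalgebras of an A-valued probability space (B, E) that are monotone independent over A. Then B₁, …, B_{N−1}, B_N + A (the unital A-algebra generated by B_N) are also monotone independent over A. -/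
/-- Monotone independence over `A` of a family of subsets `C 0, …, C (N-1)` of `B`
with respect to the `A`-valued expectation `E` (and the inclusion `ι : A → B`):
whenever `b_j` lies in an algebra whose index strictly exceeds those of both of its
neighbors (with the one-sided condition at the ends), `b_j` may be replaced by `E(b_j)`
inside the expectation of the product. -/
def MonIndep {A B : Type*} [Ring B] (N : ℕ) (E : B → A) (ι : A → B)
    (C : Fin N → Set B) : Prop :=
  ∀ (m : ℕ), 2 ≤ m → ∀ (k : Fin m → Fin N) (b : Fin m → B),
    (∀ i, b i ∈ C (k i)) → ∀ j : Fin m,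
    (∀ h : (j : ℕ) + 1 < m, k ⟨(j : ℕ) + 1, h⟩ < k j) →
    (∀ _h : 0 < (j : ℕ),
        k ⟨(j : ℕ) - 1, lt_of_le_of_lt (Nat.sub_le _ _) j.isLt⟩ < k j) →
    E (List.ofFn b).prod = E (List.ofFn (Function.update b j (ι (E (b j))))).prod

/-!
Write every letter of the top algebra as `c + ι a` and expand the product multilinearly.
The neighbours of a peak have strictly smaller index, so they are never letters of the top
algebra; hence in each resulting word the peak is flanked by letters of genuine algebras
`C i`, and every stray `ι a` can be absorbed into an adjacent letter on its own side of the
peak (each `C i` is an `A`-bimodule) without changing the indices next to the peak. Each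
term is then a word to which the monotone independence of the `C i` applies, and both sides
of the identity are additive in the left and right contexts of the peak.
-/

open Function

theorem List.ofFn_update {α : Type*} {m : ℕ} (b : Fin m → α) (j : Fin m) (v : α) :
    List.ofFn (update b j v) = (List.ofFn b).set j v := by
  refine List.ext_getElem (by simp) fun i h₁ h₂ => ?_
  simp only [List.getElem_ofFn, List.getElem_set, update_apply, Fin.ext_iff,
    eq_comm (a := (j : ℕ))]

section Words

open AddSubmonoid

variable {A B : Type*} {F G : Type*} {n : ℕ}

def IsWord (C : Fin n → Set B) (w : List (Fin n × B)) : Prop :=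
  ∀ q ∈ w, q.2 ∈ C q.1

@[simp] theorem isWord_nil (C : Fin n → Set B) : IsWord C [] := by
  simp [IsWord]

@[simp] theorem isWord_cons {C : Fin n → Set B} {q : Fin n × B} {w : List (Fin n × B)} :
    IsWord C (q :: w) ↔ q.2 ∈ C q.1 ∧ IsWord C w :=
  List.forall_mem_cons

@[simp] theorem isWord_append {C : Fin n → Set B} {v w : List (Fin n × B)} :
    IsWord C (v ++ w) ↔ IsWord C v ∧ IsWord C w :=
  List.forall_mem_append

def augment [Add B] (C : Fin n → Set B) (ι : A → B) (i : Fin n) : Set B :=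
  {u | ∃ c ∈ C i, ∃ a : A, u = c + ι a}

theorem mem_of_mem_update_last_of_lt {C : Fin (n + 1) → Set B} {S : Set B} {i i' : Fin (n + 1)}
    {u : B} (hu : u ∈ update C (Fin.last n) S i) (hi : i < i') : u ∈ C i := by
  rwa [update_of_ne (hi.trans_le (Fin.le_last i')).ne] at hu

variable [Ring B]

def wordProd (w : List (Fin n × B)) : B :=
  (w.map Prod.snd).prod

@[simp] theorem wordProd_nil : wordProd ([] : List (Fin n × B)) = 1 := rfl

@[simp] theorem wordProd_cons (q : Fin n × B) (w : List (Fin n × B)) :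
    wordProd (q :: w) = q.2 * wordProd w := by
  simp [wordProd]

@[simp] theorem wordProd_append (v w : List (Fin n × B)) :
    wordProd (v ++ w) = wordProd v * wordProd w := by
  simp [wordProd]

theorem MonIndep.wordProd_mul_mul_eq {E : B → A} {ι : A → B} {C : Fin n → Set B}
    (hind : MonIndep n E ι C) (hE : ∀ a, E (ι a) = a) {l r : List (Fin n × B)}
    (hl : IsWord C l) (hr : IsWord C r) {k : Fin n} {x : B} (hx : x ∈ C k)
    (hlast : ∀ q ∈ l.getLast?, q.1 < k) (hhead : ∀ q ∈ r.head?, q.1 < k) :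
    E (wordProd l * x * wordProd r) = E (wordProd l * ι (E x) * wordProd r) := by
  by_cases hlr : l = [] ∧ r = []
  · obtain ⟨rfl, rfl⟩ := hlr
    simp [hE]
  set L := l ++ (k, x) :: r with hL
  have hlen : L.length = l.length + 1 + r.length := by simp [hL]; omega
  have hm : 2 ≤ L.length := by
    rcases not_and_or.mp hlr with h | h <;> have := List.length_pos_iff.mpr h <;> omega
  have hmid : L[l.length]'(by omega) = (k, x) := by simp [hL]
  have key := hind L.length hm (fun t => L[(t : ℕ)].1) (fun t => L[(t : ℕ)].2)
    (fun t => ?mem) ⟨l.length, by omega⟩ (fun h => ?right) (fun h => ?left)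
  case mem =>
    rcases List.mem_append.mp (List.getElem_mem t.isLt) with h | h
    · exact hl _ h
    · rcases List.mem_cons.mp h with h | h
      · simp only [h]; exact hx
      · exact hr _ h
  case right =>
    have hr0 : 0 < r.length := by simp only at h; omega
    have : L[l.length + 1] = r[0] := by simp [hL, List.getElem_append_right]
    show L[l.length + 1].1 < L[l.length].1
    rw [this, hmid]
    exact hhead _ (by simp [List.head?_eq_getElem?, hr0])
  case left =>
    have hl0 : l.length - 1 < l.length := by simp only at h; omega
    have : L[l.length - 1] = l[l.length - 1] := by simp [hL, List.getElem_append_left hl0]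
    show L[l.length - 1].1 < L[l.length].1
    rw [this, hmid]
    exact hlast _ (by simp [List.getLast?_eq_getElem?, hl0])
  rw [List.ofFn_update, List.ofFn_getElem_eq_map] at key
  simpa [hL, wordProd, hmid, mul_assoc] using key

-- Left and right contexts of a peak of index `k`; the empty context `1` is added separately.
def leftWords (C : Fin n → Set B) (k : Fin n) : Set B :=
  {P | ∃ w y i, IsWord C w ∧ y ∈ C i ∧ i < k ∧ P = wordProd w * y}

def rightWords (C : Fin n → Set B) (k : Fin n) : Set B :=
  {Q | ∃ y i w, y ∈ C i ∧ i < k ∧ IsWord C w ∧ Q = y * wordProd w}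

theorem MonIndep.mul_mul_eq_of_mem {E : B → A} {ι : A → B} {C : Fin n → Set B}
    (hind : MonIndep n E ι C) (hE : ∀ a, E (ι a) = a) {k : Fin n} {x P Q : B} (hx : x ∈ C k)
    (hP : P ∈ insert 1 (leftWords C k)) (hQ : Q ∈ insert 1 (rightWords C k)) :
    E (P * x * Q) = E (P * ι (E x) * Q) := by
  obtain ⟨l, hl, hlast, rfl⟩ :
      ∃ l, IsWord C l ∧ (∀ q ∈ l.getLast?, q.1 < k) ∧ P = wordProd l := by
    rcases hP with rfl | ⟨w, y, i, hw, hy, hi, rfl⟩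
    · exact ⟨[], isWord_nil C, by simp, rfl⟩
    · exact ⟨w ++ [(i, y)], by simp [hw, hy], by simpa using hi, by simp⟩
  obtain ⟨r, hr, hhead, rfl⟩ :
      ∃ r, IsWord C r ∧ (∀ q ∈ r.head?, q.1 < k) ∧ Q = wordProd r := by
    rcases hQ with rfl | ⟨y, i, w, hy, hi, hw, rfl⟩
    · exact ⟨[], isWord_nil C, by simp, rfl⟩
    · exact ⟨(i, y) :: w, by simp [hw, hy], by simpa using hi, by simp⟩
  exact hind.wordProd_mul_mul_eq hE hl hr hx hlast hhead

theorem mul_mem_leftWords {C : Fin n → Set B} {i k : Fin n} {c P : B} (hc : c ∈ C i)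
    (hP : P ∈ leftWords C k) : c * P ∈ leftWords C k := by
  obtain ⟨w, y, i', hw, hy, hi', rfl⟩ := hP
  exact ⟨(i, c) :: w, y, i', by simp [hc, hw], hy, hi', by simp [mul_assoc]⟩

theorem mul_mem_rightWords {C : Fin n → Set B} {i k : Fin n} {c Q : B} (hc : c ∈ C i)
    (hQ : Q ∈ rightWords C k) : Q * c ∈ rightWords C k := by
  obtain ⟨y, i', w, hy, hi', hw, rfl⟩ := hQ
  exact ⟨y, i', w ++ [(i, c)], hy, hi', by simp [hc, hw], by simp [mul_assoc]⟩

theorem map_mul_mem_leftWords {ι : A → B} {C : Fin n → Set B}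
    (hι : ∀ i a, ∀ x ∈ C i, ι a * x ∈ C i) {k : Fin n} (a : A) {P : B}
    (hP : P ∈ leftWords C k) : ι a * P ∈ leftWords C k := by
  obtain ⟨w, y, i, hw, hy, hi, rfl⟩ := hP
  rcases w with _ | ⟨⟨i', v⟩, w⟩
  · exact ⟨[], ι a * y, i, hw, hι i a y hy, hi, by simp⟩
  · obtain ⟨hv, hw⟩ := isWord_cons.1 hw
    exact ⟨(i', ι a * v) :: w, y, i, by simp [hι i' a v hv, hw], hy, hi, by simp [mul_assoc]⟩

theorem mul_map_mem_rightWords {ι : A → B} {C : Fin n → Set B}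
    (hι : ∀ i a, ∀ x ∈ C i, x * ι a ∈ C i) {k : Fin n} (a : A) {Q : B}
    (hQ : Q ∈ rightWords C k) : Q * ι a ∈ rightWords C k := by
  obtain ⟨y, i, w, hy, hi, hw, rfl⟩ := hQ
  rcases w.eq_nil_or_concat' with rfl | ⟨w, ⟨i', v⟩, rfl⟩
  · exact ⟨y * ι a, i, [], hι i a y hy, hi, isWord_nil C, by simp⟩
  · obtain ⟨hw, hv⟩ : IsWord C w ∧ v ∈ C i' := by simpa using hw
    exact ⟨y, i, w ++ [(i', v * ι a)], hy, hi, by simp [hι i' a v hv, hw],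
      by simp [mul_assoc]⟩

theorem mul_mem_closure_leftWords {ι : A → B} {C : Fin n → Set B}
    (hι : ∀ i a, ∀ x ∈ C i, ι a * x ∈ C i) {i k : Fin n} {u P : B}
    (hu : u ∈ augment C ι i) (hP : P ∈ closure (leftWords C k)) :
    u * P ∈ closure (leftWords C k) := by
  obtain ⟨c, hc, a, rfl⟩ := hu
  induction hP using closure_induction with
  | mem P hP =>
    rw [add_mul]
    exact add_mem (subset_closure (mul_mem_leftWords hc hP))
      (subset_closure (map_mul_mem_leftWords hι a hP))
  | zero => simp
  | add P P' _ _ ih ih' => simpa [mul_add] using add_mem ih ih'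

theorem mul_mem_closure_rightWords {ι : A → B} {C : Fin n → Set B}
    (hι : ∀ i a, ∀ x ∈ C i, x * ι a ∈ C i) {i k : Fin n} {u Q : B}
    (hu : u ∈ augment C ι i) (hQ : Q ∈ closure (rightWords C k)) :
    Q * u ∈ closure (rightWords C k) := by
  obtain ⟨c, hc, a, rfl⟩ := hu
  induction hQ using closure_induction with
  | mem Q hQ =>
    rw [mul_add]
    exact add_mem (subset_closure (mul_mem_rightWords hc hQ))
      (subset_closure (mul_map_mem_rightWords hι a hQ))
  | zero => simp
  | add Q Q' _ _ ih ih' => simpa [add_mul] using add_mem ih ih'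

theorem List.prod_mul_mem_closure_leftWords {ι : A → B} {C : Fin n → Set B}
    (hι : ∀ i a, ∀ x ∈ C i, ι a * x ∈ C i) {k : Fin n} {l : List B}
    (hl : ∀ u ∈ l, ∃ i, u ∈ augment C ι i) {P : B} (hP : P ∈ closure (leftWords C k)) :
    l.prod * P ∈ closure (leftWords C k) := by
  induction l with
  | nil => simpa using hP
  | cons u l ih =>
    obtain ⟨i, hu⟩ := hl u List.mem_cons_self
    rw [List.prod_cons, mul_assoc]
    exact mul_mem_closure_leftWords hι hu (ih fun v hv => hl v (List.mem_cons_of_mem _ hv))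

theorem List.mul_prod_mem_closure_rightWords {ι : A → B} {C : Fin n → Set B}
    (hι : ∀ i a, ∀ x ∈ C i, x * ι a ∈ C i) {k : Fin n} {l : List B}
    (hl : ∀ u ∈ l, ∃ i, u ∈ augment C ι i) {Q : B} (hQ : Q ∈ closure (rightWords C k)) :
    Q * l.prod ∈ closure (rightWords C k) := by
  induction l generalizing Q with
  | nil => simpa using hQ
  | cons u l ih =>
    obtain ⟨i, hu⟩ := hl u List.mem_cons_self
    rw [List.prod_cons, ← mul_assoc]
    exact ih (fun v hv => hl v (List.mem_cons_of_mem _ hv)) (mul_mem_closure_rightWords hι hu hQ)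

theorem map_mul_mul_eq_of_mem_closure [AddCommMonoid A] [FunLike F B A]
    [AddMonoidHomClass F B A] (E : F) {S T : Set B} {x y : B}
    (h : ∀ P ∈ S, ∀ Q ∈ T, E (P * x * Q) = E (P * y * Q)) {P Q : B}
    (hP : P ∈ closure S) (hQ : Q ∈ closure T) : E (P * x * Q) = E (P * y * Q) := by
  induction hP using closure_induction with
  | mem P hP =>
    induction hQ using closure_induction with
    | mem Q hQ => exact h P hP Q hQ
    | zero => simp
    | add Q Q' _ _ ih ih' => simp [mul_add, ih, ih']
  | zero => simp
  | add P P' _ _ ih ih' => simp [add_mul, ih, ih']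

theorem mem_augment_of_mem_update [AddZeroClass A] [FunLike G A B] [AddMonoidHomClass G A B]
    {ι : G} {C : Fin n → Set B} {i₀ i : Fin n} {u : B}
    (hu : u ∈ update C i₀ (augment C ι i₀) i) : u ∈ augment C ι i := by
  rcases eq_or_ne i i₀ with rfl | hi
  · simpa using hu
  · rw [update_of_ne hi] at hu
    exact ⟨u, hu, 0, by simp⟩

theorem MonIndep.update_last_augment [AddCommMonoid A] [FunLike F B A] [AddMonoidHomClass F B A]
    [FunLike G A B] [AddMonoidHomClass G A B] {E : F} {ι : G} {C : Fin (n + 1) → Set B}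
    (hind : MonIndep (n + 1) E ι C) (hE : ∀ a, E (ι a) = a)
    (hιl : ∀ i a, ∀ x ∈ C i, ι a * x ∈ C i)
    (hιr : ∀ i a, ∀ x ∈ C i, x * ι a ∈ C i) :
    MonIndep (n + 1) E ι (update C (Fin.last n) (augment C ι (Fin.last n))) := by
  intro m _ k b hb j hnext hprev
  have hL : ∀ u ∈ List.ofFn b, ∃ i, u ∈ augment C ι i := by
    simp only [List.mem_ofFn, forall_exists_index, forall_apply_eq_imp_iff]
    exact fun t => ⟨k t, mem_augment_of_mem_update (hb t)⟩
  have hsplit : ∀ v, (List.ofFn (update b j v)).prod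
      = ((List.ofFn b).take j).prod * v * ((List.ofFn b).drop (j + 1)).prod := by
    intro v
    simp [List.ofFn_update, List.prod_set]
  have hP : ((List.ofFn b).take j).prod ∈ closure (insert 1 (leftWords C (k j))) := by
    rcases Nat.eq_zero_or_pos (j : ℕ) with h0 | hpos
    · simpa [h0] using AddSubmonoid.subset_closure (Set.mem_insert 1 _)
    · have hb' := mem_of_mem_update_last_of_lt (hb _) (hprev hpos)
      rw [← Nat.sub_add_cancel hpos, List.take_add_one, List.getElem?_ofFn, dif_pos (by omega)]
      simp only [Option.toList_some, List.prod_append, List.prod_singleton]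
      exact closure_mono (Set.subset_insert _ _) (List.prod_mul_mem_closure_leftWords hιl
        (fun u hu => hL u (List.mem_of_mem_take hu))
        (subset_closure ⟨[], _, _, isWord_nil C, hb', hprev hpos, by simp⟩))
  have hQ : ((List.ofFn b).drop (j + 1)).prod ∈ closure (insert 1 (rightWords C (k j))) := by
    by_cases hlast : (j : ℕ) + 1 < m
    · have hb' := mem_of_mem_update_last_of_lt (hb _) (hnext hlast)
      rw [List.drop_eq_getElem_cons (by simpa using hlast), List.prod_cons, List.getElem_ofFn]
      exact closure_mono (Set.subset_insert _ _) (List.mul_prod_mem_closure_rightWords hιr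
        (fun u hu => hL u (List.mem_of_mem_drop hu))
        (subset_closure ⟨_, _, [], hb', hnext hlast, isWord_nil C, by simp⟩))
    · rw [List.drop_eq_nil_of_le (by simpa using hlast)]
      simpa using AddSubmonoid.subset_closure (Set.mem_insert 1 _)
  obtain ⟨c, hc, a, hbj⟩ := mem_augment_of_mem_update (hb j)
  have hpeak := map_mul_mul_eq_of_mem_closure E
    (fun P hP Q hQ => hind.mul_mul_eq_of_mem hE hc hP hQ) hP hQ
  conv_lhs => rw [← update_eq_self j b]
  rw [hsplit, hsplit, hbj]
  simp only [map_add, hE, mul_add, add_mul, hpeak]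

end Words

theorem stmt18_general {A B : Type*} [CStarAlgebra A] [CStarAlgebra B]
    (ι : A →⋆ₐ[ℂ] B) (E : B →ₗ[ℂ] A)
    (hE1 : ∀ a : A, E (ι a) = a)
    (N : ℕ) (C : Fin (N + 1) → Set B)
    (hCsub : ∀ i,
      (∀ x ∈ C i, ∀ y ∈ C i, x + y ∈ C i) ∧
      (∀ x ∈ C i, ∀ y ∈ C i, x * y ∈ C i) ∧
      (∀ (c : ℂ), ∀ x ∈ C i, c • x ∈ C i) ∧
      (∀ x ∈ C i, star x ∈ C i) ∧
      (∀ (a a' : A), ∀ x ∈ C i, ι a * x * ι a' ∈ C i))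
    (hind : MonIndep (N + 1) ⇑E ⇑ι C) :
    MonIndep (N + 1) ⇑E ⇑ι
      (Function.update C (Fin.last N)
        {b : B | ∃ c ∈ C (Fin.last N), ∃ a : A, b = c + ι a}) := by
  have hbimod := fun i => (hCsub i).2.2.2.2
  exact hind.update_last_augment hE1 (fun i a x hx => by simpa using hbimod i a 1 x hx)
    (fun i a x hx => by simpa using hbimod i 1 a x hx)

/-- If `A`-subalgebras `B₁, …, B_N` of an `A`-valued probability space are monotone
independent over `A`, then so are `B₁, …, B_{N-1}, B_N + A`. -/
theorem stmt18 {A B : Type*} [CStarAlgebra A] [CStarAlgebra B]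
    (ι : A →⋆ₐ[ℂ] B) (E : B →ₗ[ℂ] A)
    (hE1 : ∀ a : A, E (ι a) = a)
    (hEbi : ∀ (a a' : A) (b : B), E (ι a * b * ι a') = a * E b * a')
    (hECP : IsCP ⇑E)
    (N : ℕ) (C : Fin (N + 1) → Set B)
    (hCsub : ∀ i,
      (∀ x ∈ C i, ∀ y ∈ C i, x + y ∈ C i) ∧
      (∀ x ∈ C i, ∀ y ∈ C i, x * y ∈ C i) ∧
      (∀ (c : ℂ), ∀ x ∈ C i, c • x ∈ C i) ∧
      (∀ x ∈ C i, star x ∈ C i) ∧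
      (∀ (a a' : A), ∀ x ∈ C i, ι a * x * ι a' ∈ C i))
    (hind : MonIndep (N + 1) ⇑E ⇑ι C) :
    MonIndep (N + 1) ⇑E ⇑ι
      (Function.update C (Fin.last N)
        {b : B | ∃ c ∈ C (Fin.last N), ∃ a : A, b = c + ι a}) :=
  stmt18_general ι E hE1 N C hCsub hind
end

section
/- Let μ be a compactly supported probability measure on ℝ with rad(μ) ≤ M (support in [−M, M]) and let G̃(z) = G_μ(1/z) = Σ_{k≥0} m_k z^{k+1} be the power series of the Cauchy transform at infinity. Then G̃ has an analytic inverse function defined on the disc of radius R₂ = (3 − 2√2)/M mapping into the disc of radius R₁ = (1 − 1/√2)/M; that is, there is an analytic function Ψ : {|w| < R₂} → {|z| < R₁} with G̃(Ψ(w)) = w. -/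
/-!
Write `G̃(z) = z + φ(z)`. The bound `|m_k| ≤ M^k` gives, for `‖z‖ ≤ r` and `x = M r < 1`,
`‖φ z‖ ≤ M r² / (1 - x)` and `Lip φ ≤ 1 / (1 - x)² - 1`, which is `< 1` exactly when
`x < 1 - 1/√2`. For such `x`, `z ↦ w - φ z` is a contraction of the closed `r`-ball into itself
as soon as `M ‖w‖ ≤ x (1 - 2x) / (1 - x)`, and the supremum of the right-hand side is `3 - 2√2`.
The fixed points form a right inverse `Ψ`. It is holomorphic: `G̃` is injective on the ball of
radius `(1 - 1/√2)/M` and `‖G̃' - 1‖ ≤ Lip φ < 1` there, so `Ψ` is locally a left inverse of a map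
with nonzero strict derivative.
-/

open MeasureTheory Metric Filter Set
open scoped Topology NNReal

section LipschitzPerturbation

variable {E : Type*} [NormedAddCommGroup E]

theorem injOn_of_lipschitzOnWith_sub_self {f : E → E} {s : Set E} {K : ℝ≥0} (hK : K < 1)
    (hf : LipschitzOnWith K (fun x => f x - x) s) : InjOn f s := by
  intro x hx y hy hxy
  have h := hf.dist_le_mul x hx y hy
  rw [dist_eq_norm, hxy, sub_sub_sub_cancel_left, ← dist_eq_norm'] at h
  have hK' : (K : ℝ) < 1 := hK
  exact dist_le_zero.1 (by nlinarith [dist_nonneg (x := x) (y := y)])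

theorem exists_add_eq_of_lipschitzOnWith [CompleteSpace E] {φ : E → E} {K : ℝ≥0} {r : ℝ} {w : E}
    (hK : K < 1) (hφ : LipschitzOnWith K φ (closedBall 0 r)) (hr : 0 ≤ r)
    (hmaps : ∀ z ∈ closedBall (0 : E) r, ‖w‖ + ‖φ z‖ ≤ r) :
    ∃ z ∈ closedBall (0 : E) r, z + φ z = w := by
  have hQ : MapsTo (fun z => w - φ z) (closedBall 0 r) (closedBall 0 r) := fun z hz =>
    mem_closedBall_zero_iff.2 ((norm_sub_le _ _).trans (hmaps z hz))
  have hQlip : LipschitzOnWith K (fun z => w - φ z) (closedBall 0 r) :=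
    LipschitzOnWith.of_dist_le_mul fun x hx y hy => by
      rw [dist_sub_left]; exact hφ.dist_le_mul x hx y hy
  obtain ⟨z, hz, hfix, -⟩ := ContractingWith.exists_fixedPoint' isClosed_closedBall.isComplete hQ
    ⟨hK, hQlip.mapsToRestrict hQ⟩ (mem_closedBall_self hr) (edist_ne_top _ _)
  exact ⟨z, hz, eq_sub_iff_add_eq.1 hfix.eq.symm⟩

end LipschitzPerturbation

section InverseFunction

variable {𝕜 : Type*} [NontriviallyNormedField 𝕜]

theorem HasDerivAt.ne_zero_of_lipschitzOnWith_sub_self {f : 𝕜 → 𝕜} {f' x : 𝕜}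
    (hf : HasDerivAt f f' x) {s : Set 𝕜} (hs : s ∈ 𝓝 x) {K : ℝ≥0} (hK : K < 1)
    (hlip : LipschitzOnWith K (fun z => f z - z) s) : f' ≠ 0 := by
  rintro rfl
  have h := (hf.sub (hasDerivAt_id' x)).le_of_lipschitzOn hs hlip
  rw [zero_sub, norm_neg, norm_one] at h
  exact hK.not_ge (by exact_mod_cast h)

theorem HasStrictDerivAt.of_rightInvOn [CompleteSpace 𝕜] {f g : 𝕜 → 𝕜} {s t : Set 𝕜} {f' w : 𝕜}
    (hf : HasStrictDerivAt f f' (g w)) (hf' : f' ≠ 0) (hs : IsOpen s) (ht : IsOpen t)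
    (hinj : InjOn f s) (hg : MapsTo g t s) (hfg : RightInvOn g f t) (hw : w ∈ t) :
    HasStrictDerivAt g f'⁻¹ w := by
  have hft : ∀ᶠ z in 𝓝 (g w), f z ∈ t :=
    hf.hasDerivAt.continuousAt.preimage_mem_nhds (by rw [hfg hw]; exact ht.mem_nhds hw)
  have hgf : ∀ᶠ z in 𝓝 (g w), g (f z) = z := by
    filter_upwards [hft, hs.mem_nhds (hg hw)] with z hzt hzs
    exact hinj (hg hzt) hzs (hfg hzt)
  simpa [hfg hw] using hf.to_local_left_inverse hf' hgf

end InverseFunction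

theorem norm_pow_succ_sub_pow_succ_le {R : Type*} [SeminormedCommRing R] [NormOneClass R]
    {x y : R} {r : ℝ} (hx : ‖x‖ ≤ r) (hy : ‖y‖ ≤ r) (n : ℕ) :
    ‖x ^ (n + 1) - y ^ (n + 1)‖ ≤ (n + 1) * r ^ n * ‖x - y‖ := by
  induction n with
  | zero => simp
  | succ n ih =>
    have hr : 0 ≤ r := (norm_nonneg x).trans hx
    calc ‖x ^ (n + 2) - y ^ (n + 2)‖
        = ‖x ^ (n + 1) * (x - y) + (x ^ (n + 1) - y ^ (n + 1)) * y‖ := by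
          congr 1; ring
      _ ≤ ‖x‖ ^ (n + 1) * ‖x - y‖ + ((n + 1) * r ^ n * ‖x - y‖) * ‖y‖ := by
        refine (norm_add_le _ _).trans (add_le_add ?_ ?_)
        · exact (norm_mul_le _ _).trans (by gcongr; exact norm_pow_le _ _)
        · exact (norm_mul_le _ _).trans (by gcongr)
      _ ≤ r ^ (n + 1) * ‖x - y‖ + ((n + 1) * r ^ n * ‖x - y‖) * r := by gcongr
      _ = ((n + 1 : ℕ) + 1) * r ^ (n + 1) * ‖x - y‖ := by push_cast; ring

theorem hasSum_add_two_mul_pow_succ {𝕜 : Type*} [NormedField 𝕜] {x : 𝕜} (hx : ‖x‖ < 1) :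
    HasSum (fun k : ℕ => ((k : 𝕜) + 2) * x ^ (k + 1)) (1 / (1 - x) ^ 2 - 1) := by
  have h := (hasSum_nat_add_iff' 1).2 (hasSum_choose_mul_geometric_of_norm_lt_one (𝕜 := 𝕜) 1 hx)
  norm_num [add_assoc, one_add_one_eq_two] at h
  rwa [one_div]

theorem one_div_one_sub_sq_sub_one_lt_one {x : ℝ} (hx : x < 1 - 1 / √2) :
    1 / (1 - x) ^ 2 - 1 < 1 := by
  have hs : (1 / √2) ^ 2 = 1 / 2 := by rw [div_pow, Real.sq_sqrt zero_le_two, one_pow]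
  have hs0 : 0 < 1 / √2 := by positivity
  have h2 : 1 / 2 < (1 - x) ^ 2 := by nlinarith
  rw [sub_lt_iff_lt_add, div_lt_iff₀ (by positivity)]
  linarith

theorem one_sub_one_div_sqrt_two_pos : 0 < 1 - 1 / √2 :=
  sub_pos.2 ((div_lt_one (by positivity)).2 Real.one_lt_sqrt_two)

theorem exists_lt_mul_one_sub_two_mul_div {ρ : ℝ} (hρ : ρ < 3 - 2 * √2) :
    ∃ x, 0 < x ∧ x < 1 - 1 / √2 ∧ ρ < x * (1 - 2 * x) / (1 - x) := by
  have hs : √2 ^ 2 = 2 := Real.sq_sqrt zero_le_two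
  set x₀ := 1 - 1 / √2
  have hx₀ : 0 < x₀ := one_sub_one_div_sqrt_two_pos
  have h1x₀ : 1 - x₀ ≠ 0 := by simp [x₀]
  -- the maximum of `x (1 - 2x) / (1 - x)` on `[0, 1)` is attained at `x₀`
  have hval : x₀ * (1 - 2 * x₀) / (1 - x₀) = 3 - 2 * √2 := by
    rw [div_eq_iff h1x₀]; simp only [x₀]; field_simp; nlinarith
  have hcont : ContinuousAt (fun x : ℝ => x * (1 - 2 * x) / (1 - x)) x₀ :=
    ContinuousAt.div (by fun_prop) (by fun_prop) h1x₀
  have hev : ∀ᶠ x in 𝓝[<] x₀, 0 < x ∧ ρ < x * (1 - 2 * x) / (1 - x) :=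
    nhdsWithin_le_nhds ((eventually_gt_nhds hx₀).and
      (hcont.eventually_const_lt (show ρ < x₀ * (1 - 2 * x₀) / (1 - x₀) by rwa [hval])))
  obtain ⟨x, ⟨hx0, hxρ⟩, hxx₀⟩ := (hev.and self_mem_nhdsWithin).exists
  exact ⟨x, hx0, hxx₀, hxρ⟩

noncomputable def momentSeries (a : ℕ → ℂ) (z : ℂ) : ℂ := ∑' k, a k * z ^ (k + 1)

section MomentSeries

variable {a : ℕ → ℂ} {M r : ℝ} {z : ℂ}

theorem norm_coeff_mul_pow_le (ha : ∀ k, ‖a k‖ ≤ M ^ k) (hz : ‖z‖ ≤ r) (k : ℕ) :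
    ‖a k * z ^ (k + 1)‖ ≤ r * (M * r) ^ k := by
  have hr : 0 ≤ r := (norm_nonneg z).trans hz
  calc ‖a k * z ^ (k + 1)‖ = ‖a k‖ * ‖z‖ ^ (k + 1) := by rw [norm_mul, norm_pow]
    _ ≤ M ^ k * r ^ (k + 1) :=
      mul_le_mul (ha k) (pow_le_pow_left₀ (norm_nonneg _) hz _) (by positivity)
        ((norm_nonneg _).trans (ha k))
    _ = r * (M * r) ^ k := by ring

theorem hasSum_momentSeries (ha : ∀ k, ‖a k‖ ≤ M ^ k) (hr : M * r < 1) (hz : ‖z‖ ≤ r) :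
    HasSum (fun k => a k * z ^ (k + 1)) (momentSeries a z) := by
  have hM : 0 ≤ M := (norm_nonneg _).trans (by simpa using ha 1)
  have hr0 : 0 ≤ r := (norm_nonneg z).trans hz
  refine (Summable.of_norm_bounded ?_ (norm_coeff_mul_pow_le ha hz)).hasSum
  exact (summable_geometric_of_lt_one (by positivity) hr).mul_left r

theorem analyticOnNhd_momentSeries (ha : ∀ k, ‖a k‖ ≤ M ^ k) (hr0 : 0 ≤ r) (hr : M * r < 1) :
    AnalyticOnNhd ℂ (momentSeries a) (ball 0 r) := by
  have hM : 0 ≤ M := (norm_nonneg _).trans (by simpa using ha 1)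
  refine DifferentiableOn.analyticOnNhd ?_ isOpen_ball
  exact Complex.differentiableOn_tsum_of_summable_norm
    ((summable_geometric_of_lt_one (by positivity) hr).mul_left r)
    (fun k => by fun_prop) isOpen_ball
    (fun k z hz => norm_coeff_mul_pow_le ha (mem_ball_zero_iff.1 hz).le k)

theorem norm_momentSeries_sub_self_le (ha : ∀ k, ‖a k‖ ≤ M ^ k) (ha0 : a 0 = 1)
    (hr : M * r < 1) (hz : ‖z‖ ≤ r) :
    ‖momentSeries a z - z‖ ≤ M * r ^ 2 / (1 - M * r) := by
  have hM : 0 ≤ M := (norm_nonneg _).trans (by simpa using ha 1)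
  have hr0 : 0 ≤ r := (norm_nonneg z).trans hz
  have htail : HasSum (fun k => a (k + 1) * z ^ (k + 1 + 1)) (momentSeries a z - z) := by
    simpa [ha0] using (hasSum_nat_add_iff' 1).2 (hasSum_momentSeries ha hr hz)
  have hgeom : HasSum (fun k => r * (M * r) ^ (k + 1)) (M * r ^ 2 / (1 - M * r)) := by
    rw [show M * r ^ 2 / (1 - M * r) = r * (M * r) * (1 - M * r)⁻¹ by ring]
    exact ((hasSum_geometric_of_lt_one (by positivity) hr).mul_left (r * (M * r))).congr_fun
      fun k => by ring
  exact htail.norm_le_of_bounded hgeom fun k => norm_coeff_mul_pow_le ha hz (k + 1)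

theorem lipschitzOnWith_momentSeries_sub_self (ha : ∀ k, ‖a k‖ ≤ M ^ k) (ha0 : a 0 = 1)
    (hr0 : 0 ≤ r) (hr : M * r < 1) :
    LipschitzOnWith (1 / (1 - M * r) ^ 2 - 1).toNNReal (fun z => momentSeries a z - z)
      (closedBall 0 r) := by
  have hM : 0 ≤ M := (norm_nonneg _).trans (by simpa using ha 1)
  refine LipschitzOnWith.of_dist_le_mul fun z₁ h₁ z₂ h₂ => ?_
  rw [mem_closedBall_zero_iff] at h₁ h₂
  have hdiff : HasSum (fun k => a (k + 1) * (z₁ ^ (k + 1 + 1) - z₂ ^ (k + 1 + 1)))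
      ((momentSeries a z₁ - z₁) - (momentSeries a z₂ - z₂)) := by
    have h := (hasSum_momentSeries ha hr h₁).sub (hasSum_momentSeries ha hr h₂)
    have h' := (hasSum_nat_add_iff' 1).2 h
    simp only [Finset.range_one, Finset.sum_singleton, ha0, zero_add, one_mul, pow_one,
      ← mul_sub] at h'
    rwa [sub_sub_sub_comm]
  have hbound : HasSum (fun k : ℕ => ((k : ℝ) + 2) * (M * r) ^ (k + 1) * ‖z₁ - z₂‖)
      ((1 / (1 - M * r) ^ 2 - 1) * ‖z₁ - z₂‖) := by
    have hx : ‖M * r‖ < 1 := by rwa [Real.norm_of_nonneg (by positivity)]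
    exact (hasSum_add_two_mul_pow_succ hx).mul_right _
  rw [dist_eq_norm, dist_eq_norm, Real.coe_toNNReal']
  refine (hdiff.norm_le_of_bounded hbound fun k => ?_).trans
    (mul_le_mul_of_nonneg_right (le_max_left _ _) (norm_nonneg _))
  calc ‖a (k + 1) * (z₁ ^ (k + 1 + 1) - z₂ ^ (k + 1 + 1))‖
      ≤ M ^ (k + 1) * (((k + 1 : ℕ) + 1) * r ^ (k + 1) * ‖z₁ - z₂‖) := by
        rw [norm_mul]
        exact mul_le_mul (ha _) (norm_pow_succ_sub_pow_succ_le h₁ h₂ _) (norm_nonneg _)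
          (by positivity)
    _ = ((k : ℝ) + 2) * (M * r) ^ (k + 1) * ‖z₁ - z₂‖ := by push_cast; ring

end MomentSeries

section InverseOfMomentSeries

variable {a : ℕ → ℂ} {M : ℝ}

theorem exists_lipschitzOnWith_momentSeries_sub_self_lt_one (hM : 0 < M)
    (ha : ∀ k, ‖a k‖ ≤ M ^ k) (ha0 : a 0 = 1) {r : ℝ} (hr0 : 0 ≤ r)
    (hr : r < (1 - 1 / √2) / M) :
    ∃ K < 1, LipschitzOnWith K (fun z => momentSeries a z - z) (closedBall 0 r) := by
  have hMr : M * r < 1 - 1 / √2 := by rwa [lt_div_iff₀' hM] at hr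
  have hs : 0 < 1 / √2 := by positivity
  exact ⟨_, Real.toNNReal_lt_one.2 (one_div_one_sub_sq_sub_one_lt_one hMr),
    lipschitzOnWith_momentSeries_sub_self ha ha0 hr0 (by linarith)⟩

theorem exists_momentSeries_eq (hM : 0 < M) (ha : ∀ k, ‖a k‖ ≤ M ^ k) (ha0 : a 0 = 1) {w : ℂ}
    (hw : ‖w‖ < (3 - 2 * √2) / M) :
    ∃ z ∈ ball (0 : ℂ) ((1 - 1 / √2) / M), momentSeries a z = w := by
  obtain ⟨x, hx0, hx, hxw⟩ := exists_lt_mul_one_sub_two_mul_div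
    (by rwa [lt_div_iff₀' hM] at hw : M * ‖w‖ < 3 - 2 * √2)
  have hx1 : 0 < 1 - x := by linarith [show 0 < 1 / √2 by positivity]
  set r := x / M
  have hMr : M * r = x := mul_div_cancel₀ x hM.ne'
  have hr0 : 0 ≤ r := by positivity
  have hrR : r < (1 - 1 / √2) / M := div_lt_div_of_pos_right hx hM
  obtain ⟨K, hK, hlip⟩ := exists_lipschitzOnWith_momentSeries_sub_self_lt_one hM ha ha0 hr0 hrR
  have hw' : ‖w‖ ≤ r * (1 - 2 * x) / (1 - x) := by
    rw [lt_div_iff₀ hx1] at hxw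
    rw [le_div_iff₀ hx1, ← mul_le_mul_iff_of_pos_left hM, ← mul_assoc, ← mul_assoc, hMr]
    linarith
  have hmaps : ∀ z ∈ closedBall (0 : ℂ) r, ‖w‖ + ‖momentSeries a z - z‖ ≤ r := by
    intro z hz
    have hφ := norm_momentSeries_sub_self_le ha ha0 (by linarith) (mem_closedBall_zero_iff.1 hz)
    calc ‖w‖ + ‖momentSeries a z - z‖ ≤ r * (1 - 2 * x) / (1 - x) + M * r ^ 2 / (1 - M * r) :=
          add_le_add hw' hφ
      _ = r := by rw [sq, ← mul_assoc, hMr]; field_simp; ring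
  obtain ⟨z, hz, hzw⟩ := exists_add_eq_of_lipschitzOnWith hK hlip hr0 hmaps
  exact ⟨z, mem_ball_zero_iff.2 ((mem_closedBall_zero_iff.1 hz).trans_lt hrR),
    by rwa [add_sub_cancel] at hzw⟩

theorem injOn_momentSeries (hM : 0 < M) (ha : ∀ k, ‖a k‖ ≤ M ^ k) (ha0 : a 0 = 1) :
    InjOn (momentSeries a) (ball 0 ((1 - 1 / √2) / M)) := by
  intro z₁ h₁ z₂ h₂
  obtain ⟨K, hK, hlip⟩ := exists_lipschitzOnWith_momentSeries_sub_self_lt_one hM ha ha0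
    (r := max ‖z₁‖ ‖z₂‖) ((norm_nonneg _).trans (le_max_left _ _))
    (max_lt (mem_ball_zero_iff.1 h₁) (mem_ball_zero_iff.1 h₂))
  exact injOn_of_lipschitzOnWith_sub_self hK hlip
    (mem_closedBall_zero_iff.2 (le_max_left _ _)) (mem_closedBall_zero_iff.2 (le_max_right _ _))

theorem exists_analyticOnNhd_rightInvOn_momentSeries (hM : 0 < M) (ha : ∀ k, ‖a k‖ ≤ M ^ k)
    (ha0 : a 0 = 1) :
    ∃ Ψ : ℂ → ℂ, AnalyticOnNhd ℂ Ψ (ball 0 ((3 - 2 * √2) / M)) ∧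
      ∀ w ∈ ball (0 : ℂ) ((3 - 2 * √2) / M), Ψ w ∈ ball (0 : ℂ) ((1 - 1 / √2) / M) ∧
        HasSum (fun k => a k * Ψ w ^ (k + 1)) w := by
  set R₁ := (1 - 1 / √2) / M
  have hR₁ : 0 ≤ R₁ := div_nonneg one_sub_one_div_sqrt_two_pos.le hM.le
  have hMR₁ : M * R₁ < 1 := by
    rw [mul_div_cancel₀ _ hM.ne']; linarith [show 0 < 1 / √2 by positivity]
  choose! Ψ hΨ hGΨ using fun w (hw : w ∈ ball (0 : ℂ) ((3 - 2 * √2) / M)) =>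
    exists_momentSeries_eq hM ha ha0 (mem_ball_zero_iff.1 hw)
  refine ⟨Ψ, DifferentiableOn.analyticOnNhd (fun w hw => ?_) isOpen_ball, fun w hw =>
    ⟨hΨ w hw, by simpa only [hGΨ w hw] using
      hasSum_momentSeries ha hMR₁ (mem_ball_zero_iff.1 (hΨ w hw)).le⟩⟩
  obtain ⟨r, hΨr, hrR₁⟩ := exists_between (mem_ball_zero_iff.1 (hΨ w hw))
  obtain ⟨K, hK, hlip⟩ := exists_lipschitzOnWith_momentSeries_sub_self_lt_one hM ha ha0
    ((norm_nonneg _).trans hΨr.le) hrR₁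
  have hG := (analyticOnNhd_momentSeries ha hR₁ hMR₁ _ (hΨ w hw)).hasStrictDerivAt
  have hG' : deriv (momentSeries a) (Ψ w) ≠ 0 := hG.hasDerivAt.ne_zero_of_lipschitzOnWith_sub_self
    (closedBall_mem_nhds_of_mem (mem_ball_zero_iff.2 hΨr)) hK hlip
  exact (hG.of_rightInvOn hG' isOpen_ball isOpen_ball (injOn_momentSeries hM ha ha0) hΨ hGΨ
    hw).hasDerivAt.differentiableAt.differentiableWithinAt

end InverseOfMomentSeries

theorem abs_integral_pow_le {μ : Measure ℝ} [IsProbabilityMeasure μ] {M : ℝ}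
    (hsupp : μ (Icc (-M) M)ᶜ = 0) (k : ℕ) : |∫ t, t ^ k ∂μ| ≤ M ^ k := by
  have hbound : ∀ᵐ t ∂μ, ‖t ^ k‖ ≤ M ^ k := by
    filter_upwards [measure_eq_zero_iff_ae_notMem.1 hsupp] with t ht
    rw [notMem_compl_iff, mem_Icc, ← abs_le] at ht
    rw [norm_pow]
    exact pow_le_pow_left₀ (norm_nonneg t) ht k
  simpa using norm_integral_le_of_norm_le_const hbound

/-- Inverse function of the truncated Cauchy transform: for a probability measure `μ` on ℝ
supported in `[-M, M]`, the moment series `G̃(z) = Σ_k m_k z^{k+1}` admits an analytic right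
inverse `Ψ` mapping the disc of radius `R₂ = (3 - 2√2)/M` into the disc of radius
`R₁ = (1 - 1/√2)/M`, i.e. `G̃(Ψ(w)) = w`. -/
theorem stmt19 (μ : Measure ℝ) [IsProbabilityMeasure μ] (M : ℝ) (hM : 0 < M)
    (hsupp : μ ((Set.Icc (-M) M)ᶜ) = 0) :
    ∃ Ψ : ℂ → ℂ, AnalyticOnNhd ℂ Ψ (ball (0:ℂ) ((3 - 2 * Real.sqrt 2) / M)) ∧
      ∀ w ∈ ball (0:ℂ) ((3 - 2 * Real.sqrt 2) / M),
        Ψ w ∈ ball (0:ℂ) ((1 - 1 / Real.sqrt 2) / M) ∧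
        HasSum (fun k : ℕ => ((∫ t, t ^ k ∂μ : ℝ) : ℂ) * (Ψ w) ^ (k + 1)) w :=
  exists_analyticOnNhd_rightInvOn_momentSeries hM
    (fun k => by simpa using abs_integral_pow_le hsupp k) (by simp)
end
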